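/- Define F : ℂ \ {0,1} → ℝ by F(t) = |t|^{1/24} · |t−1|^{1/24} / (|√t − 1| + |√t + 1|)^{1/4}, where √t denotes the principal complex square root of t (the value of the denominator does not depend on the choice of square root). Then F(1−t) = F(t) for every t ∈ ℂ \ {0,1}. -/

import Mathlib

/-- `F(t) = |t|^{1/24} |t−1|^{1/24} / (|√t−1| + |√t+1|)^{1/4}`, where `√t = t^{1/2}` is
the principal complex square root (the value of the denominator does not depend on the
choice of square root). -/
noncomputable def F (t : ℂ) : ℝ :=
  ‖t‖ ^ ((1 : ℝ) / 24) * ‖t - 1‖ ^ ((1 : ℝ) / 24) /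
    (‖t ^ ((1 : ℂ) / 2) - 1‖ + ‖t ^ ((1 : ℂ) / 2) + 1‖) ^ ((1 : ℝ) / 4)

/-! The denominator of `F` depends on `t` only through `|t|` and `|t - 1|`: by the parallelogram
law `|s - 1|² + |s + 1|² = 2(|s|² + 1)`, and `|s - 1| |s + 1| = |s² - 1|`. Since `t ↦ 1 - t`
swaps `|t|` and `|t - 1|`, the symmetry of `F` follows. -/

theorem Complex.norm_sub_one_add_norm_add_one_sq (s : ℂ) :
    (‖s - 1‖ + ‖s + 1‖) ^ 2 = 2 * (‖s ^ 2‖ + ‖s ^ 2 - 1‖ + 1) := by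
  have parallelogram : ‖s + 1‖ ^ 2 + ‖s - 1‖ ^ 2 = 2 * (‖s‖ ^ 2 + 1) := by
    simpa using parallelogram_law_with_norm ℝ s 1
  have product : ‖s - 1‖ * ‖s + 1‖ = ‖s ^ 2 - 1‖ := by
    rw [← norm_mul]; ring_nf
  rw [norm_pow, ← product]
  linear_combination parallelogram

theorem Complex.cpow_one_div_two_sq (t : ℂ) : (t ^ ((1 : ℂ) / 2)) ^ 2 = t := by
  rw [one_div, Complex.cpow_ofNat_inv_pow]

theorem Complex.norm_cpow_one_div_two_sub_one_add_norm_add_one (t : ℂ) :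
    ‖t ^ ((1 : ℂ) / 2) - 1‖ + ‖t ^ ((1 : ℂ) / 2) + 1‖ = √(2 * (‖t‖ + ‖t - 1‖ + 1)) := by
  conv_rhs => rw [← Complex.cpow_one_div_two_sq t]
  rw [← Complex.norm_sub_one_add_norm_add_one_sq, Real.sqrt_sq (by positivity)]

theorem F_one_sub_general (t : ℂ) : F (1 - t) = F t := by
  simp only [F, Complex.norm_cpow_one_div_two_sub_one_add_norm_add_one, sub_sub_cancel_left,
    norm_neg, norm_sub_rev 1 t]
  ring_nf

/-- `F(1−t) = F(t)` for every `t ∈ ℂ \ {0,1}`. -/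
theorem F_one_sub (t : ℂ) (h0 : t ≠ 0) (h1 : t ≠ 1) : F (1 - t) = F t :=
  F_one_sub_general t
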